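/- arXiv:2205.11596 — 2 statements merged into one kernel-verified Lean document; each statement's English description precedes it below -/
import Mathlib

section
/- Let p ≥ 0 be an integer, n > 0 real and κ ∈ ℂ with F_p(κ, n) = 0. Then the partial derivative of F_p with respect to the real parameter n satisfies ∂_n F_p(κ, n) = ((n·κ² − p²)/(2n))·J_p(κ)·J_p(√n·κ) + (κ²/(2√n))·J_p'(κ)·J_p'(√n·κ). -/
open Complex Real Filter Set

/-- Bessel function of the first kind of integer order `p`. -/
noncomputable def besselJ (p : ℕ) (z : ℂ) : ℂ :=
  ∑' m : ℕ, ((-1 : ℂ) ^ m / ((Nat.factorial m : ℂ) * (Nat.factorial (m + p) : ℂ)))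
    * (z / 2) ^ (2 * m + p)

/-- Derivative of the Bessel function. -/
noncomputable def besselJ' (p : ℕ) (z : ℂ) : ℂ := deriv (besselJ p) z

/-- The ITE determinant function `F_p(κ, n)`. -/
noncomputable def Fp (p : ℕ) (κ : ℂ) (n : ℝ) : ℂ :=
  κ * (besselJ' p κ * besselJ p ((Real.sqrt n : ℂ) * κ)
    - (Real.sqrt n : ℂ) * besselJ p κ * besselJ' p ((Real.sqrt n : ℂ) * κ))

/-!
Differentiating `F_p(κ, ·)` through `t ↦ √t κ` produces a term `J_p''(√n κ)`. Bessel's equation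
`z² J_p'' + z J_p' + (z² - p²) J_p = 0` at `z = √n κ` eliminates it, and the two
`J_p(κ) J_p'(√n κ)` terms cancel. Bessel's equation itself is checked on the power series
`∑ c_m w^(2m+p)` (`w = z/2`), which may be differentiated termwise because `k r^(k-1) ≤ (r+1)^k`
keeps the derived series absolutely convergent on all of `ℂ`.
-/

lemma natCast_mul_pow_sub_one_le_add_one_pow (k : ℕ) {r : ℝ} (hr : 0 ≤ r) :
    k * r ^ (k - 1) ≤ (r + 1) ^ k := by
  induction k with
  | zero => simp
  | succ k ih =>
    rcases k with _ | k
    · simpa using hr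
    · have hpow : r ^ (k + 1) ≤ (r + 1) ^ (k + 1) := pow_le_pow_left₀ hr (by linarith) _
      simp only [Nat.add_sub_cancel, Nat.cast_add, Nat.cast_one] at ih ⊢
      calc ((k : ℝ) + 1 + 1) * r ^ (k + 1) = r * (((k : ℝ) + 1) * r ^ k) + r ^ (k + 1) := by ring
        _ ≤ r * (r + 1) ^ (k + 1) + (r + 1) ^ (k + 1) := by gcongr
        _ = (r + 1) ^ (k + 1 + 1) := by ring

lemma natCast_mul_pow_sub_one_mul {R : Type*} [Semiring R] (k : ℕ) (w : R) :
    (k : R) * w ^ (k - 1) * w = k * w ^ k := by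
  rcases k with _ | k
  · simp
  · rw [Nat.add_sub_cancel, mul_assoc, ← pow_succ]

lemma natCast_mul_natCast_sub_one_mul_pow {R : Type*} [CommRing R] (k : ℕ) (w : R) :
    (k : R) * ((k - 1 : ℕ) : R) * w ^ (k - 1 - 1) * w ^ 2 = k * (k - 1) * w ^ k := by
  rcases k with _ | _ | k
  · simp
  · simp
  · simp only [Nat.add_sub_cancel]
    push_cast
    ring

section LacunarySeries

variable {𝕜 : Type*} [RCLike 𝕜]

def SummableNormMulPow (a : ℕ → 𝕜) (e : ℕ → ℕ) : Prop :=
  ∀ r : ℝ, 0 ≤ r → Summable fun m => ‖a m‖ * r ^ e m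

namespace SummableNormMulPow

variable {a : ℕ → 𝕜} {e : ℕ → ℕ}

lemma summable (h : SummableNormMulPow a e) (z : 𝕜) : Summable fun m => a m * z ^ e m :=
  .of_norm <| by simpa only [norm_mul, norm_pow] using h ‖z‖ (norm_nonneg z)

lemma deriv_series (h : SummableNormMulPow a e) :
    SummableNormMulPow (fun m => a m * e m) (fun m => e m - 1) := fun r hr =>
  .of_nonneg_of_le (fun m => by positivity)
    (fun m => by
      rw [norm_mul, RCLike.norm_natCast, mul_assoc]
      exact mul_le_mul_of_nonneg_left (natCast_mul_pow_sub_one_le_add_one_pow _ hr)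
        (norm_nonneg _))
    (h (r + 1) (by linarith))

lemma hasDerivAt (h : SummableNormMulPow a e) (z : 𝕜) :
    HasDerivAt (fun w => ∑' m, a m * w ^ e m) (∑' m, a m * e m * z ^ (e m - 1)) z := by
  set R := ‖z‖ + 1
  refine hasDerivAt_tsum_of_isPreconnected (g := fun m w => a m * w ^ e m)
    (g' := fun m w => a m * e m * w ^ (e m - 1))
    (h.deriv_series R (by positivity)) Metric.isOpen_ball
    (convex_ball (0 : 𝕜) R).isPreconnected (fun m y _ => ?_) (fun m y hy => ?_)
    (Metric.mem_ball_self (by positivity)) (h.summable 0) (by simp [R])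
  · simpa [mul_assoc] using (hasDerivAt_pow (e m) y).const_mul (a m)
  · rw [mem_ball_zero_iff] at hy
    rw [norm_mul, norm_pow]
    gcongr

end SummableNormMulPow

end LacunarySeries

noncomputable def besselCoeff (p m : ℕ) : ℂ :=
  (-1) ^ m / (m.factorial * (m + p).factorial)

lemma besselCoeff_succ_mul (p m : ℕ) :
    besselCoeff p (m + 1) * ((m + 1) * (m + 1 + p)) = -besselCoeff p m := by
  have hm : (m.factorial : ℂ) ≠ 0 := Nat.cast_ne_zero.2 m.factorial_ne_zero
  have hmp : ((m + p).factorial : ℂ) ≠ 0 := Nat.cast_ne_zero.2 (m + p).factorial_ne_zero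
  have hm1 : (m : ℂ) + 1 ≠ 0 := by norm_cast
  have hmp1 : (m : ℂ) + p + 1 ≠ 0 := by norm_cast
  rw [besselCoeff, besselCoeff, show m + 1 + p = m + p + 1 by omega, Nat.factorial_succ,
    Nat.factorial_succ]
  push_cast
  field_simp
  ring

lemma summableNormMulPow_besselCoeff (p : ℕ) :
    SummableNormMulPow (besselCoeff p) (fun m => 2 * m + p) := fun r hr =>
  .of_nonneg_of_le (fun m => by positivity)
    (fun m => by
      have hfac : (1 : ℝ) ≤ (m + p).factorial := by exact_mod_cast (m + p).factorial_pos
      calc ‖besselCoeff p m‖ * r ^ (2 * m + p)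
          = r ^ p * ((r ^ 2) ^ m / m.factorial) / (m + p).factorial := by
            simp only [besselCoeff, Complex.norm_div, norm_pow, norm_neg, norm_one, one_pow,
              Complex.norm_mul, RCLike.norm_natCast]
            ring
        _ ≤ r ^ p * ((r ^ 2) ^ m / m.factorial) := div_le_self (by positivity) hfac)
    ((Real.summable_pow_div_factorial (r ^ 2)).mul_left (r ^ p))

noncomputable def besselSeries (p : ℕ) (w : ℂ) : ℂ :=
  ∑' m, besselCoeff p m * w ^ (2 * m + p)

noncomputable def besselSeries' (p : ℕ) (w : ℂ) : ℂ :=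
  ∑' m, besselCoeff p m * (2 * m + p : ℕ) * w ^ (2 * m + p - 1)

noncomputable def besselSeries'' (p : ℕ) (w : ℂ) : ℂ :=
  ∑' m, besselCoeff p m * (2 * m + p : ℕ) * (2 * m + p - 1 : ℕ) * w ^ (2 * m + p - 1 - 1)

lemma hasDerivAt_besselSeries (p : ℕ) (w : ℂ) :
    HasDerivAt (besselSeries p) (besselSeries' p w) w :=
  (summableNormMulPow_besselCoeff p).hasDerivAt w

lemma hasDerivAt_besselSeries' (p : ℕ) (w : ℂ) :
    HasDerivAt (besselSeries' p) (besselSeries'' p w) w :=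
  (summableNormMulPow_besselCoeff p).deriv_series.hasDerivAt w

lemma besselSeries_ode (p : ℕ) (w : ℂ) :
    w ^ 2 * besselSeries'' p w + w * besselSeries' p w + (4 * w ^ 2 - p ^ 2) * besselSeries p w
      = 0 := by
  have hs := summableNormMulPow_besselCoeff p
  -- `(2m + p)² - p² = 4m(m + p)`, and `besselCoeff_succ_mul` makes `∑ g` telescope against
  -- `4w² besselSeries p w`.
  set g : ℕ → ℂ := fun m => 4 * m * (m + p) * besselCoeff p m * w ^ (2 * m + p) with hg
  have hterm : ∀ m, w ^ 2 * (besselCoeff p m * (2 * m + p : ℕ) * (2 * m + p - 1 : ℕ)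
        * w ^ (2 * m + p - 1 - 1))
      + w * (besselCoeff p m * (2 * m + p : ℕ) * w ^ (2 * m + p - 1))
      - p ^ 2 * (besselCoeff p m * w ^ (2 * m + p)) = g m := by
    intro m
    have h2 := natCast_mul_natCast_sub_one_mul_pow (2 * m + p) w
    have h1 := natCast_mul_pow_sub_one_mul (2 * m + p) w
    push_cast at h1 h2 ⊢
    linear_combination besselCoeff p m * h2 + besselCoeff p m * h1
  have hshift : ∀ m, g (m + 1) = -(4 * w ^ 2 * (besselCoeff p m * w ^ (2 * m + p))) := by
    intro m
    simp only [hg, pow_add]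
    push_cast
    linear_combination 4 * w ^ (2 * m + p) * w ^ 2 * besselCoeff_succ_mul p m
  have hsum : HasSum g (w ^ 2 * besselSeries'' p w + w * besselSeries' p w
      - p ^ 2 * besselSeries p w) := by
    have h := ((hs.deriv_series.deriv_series.summable w).hasSum.mul_left (w ^ 2)).add
      ((hs.deriv_series.summable w).hasSum.mul_left w) |>.sub
      ((hs.summable w).hasSum.mul_left ((p : ℂ) ^ 2))
    rwa [funext hterm] at h
  calc w ^ 2 * besselSeries'' p w + w * besselSeries' p w + (4 * w ^ 2 - p ^ 2) * besselSeries p w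
      = ∑' m, g m + 4 * w ^ 2 * besselSeries p w := by rw [hsum.tsum_eq]; ring
    _ = 0 := by
      rw [hsum.summable.tsum_eq_zero_add, tsum_congr hshift, tsum_neg, tsum_mul_left, besselSeries]
      simp [hg]

lemma besselJ_eq_besselSeries (p : ℕ) : besselJ p = fun z => besselSeries p (z / 2) := rfl

lemma hasDerivAt_comp_half {𝕜 : Type*} [NontriviallyNormedField 𝕜] {f : 𝕜 → 𝕜} {f' z : 𝕜}
    (hf : HasDerivAt f f' (z / 2)) : HasDerivAt (fun z => f (z / 2)) (f' / 2) z :=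
  (hf.comp z ((hasDerivAt_id' z).div_const 2)).congr_deriv (by ring)

lemma hasDerivAt_besselJ_series (p : ℕ) (z : ℂ) :
    HasDerivAt (besselJ p) (besselSeries' p (z / 2) / 2) z :=
  hasDerivAt_comp_half (hasDerivAt_besselSeries p _)

lemma besselJ'_eq_besselSeries' (p : ℕ) : besselJ' p = fun z => besselSeries' p (z / 2) / 2 :=
  funext fun z => (hasDerivAt_besselJ_series p z).deriv

lemma hasDerivAt_besselJ (p : ℕ) (z : ℂ) : HasDerivAt (besselJ p) (besselJ' p z) z := by
  rw [besselJ'_eq_besselSeries']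
  exact hasDerivAt_besselJ_series p z

lemma hasDerivAt_besselJ'_series (p : ℕ) (z : ℂ) :
    HasDerivAt (besselJ' p) (besselSeries'' p (z / 2) / 4) z := by
  rw [besselJ'_eq_besselSeries']
  exact ((hasDerivAt_comp_half (hasDerivAt_besselSeries' p (z / 2))).div_const 2).congr_deriv
    (by ring)

lemma hasDerivAt_besselJ' (p : ℕ) (z : ℂ) :
    HasDerivAt (besselJ' p) (deriv (besselJ' p) z) z :=
  (hasDerivAt_besselJ'_series p z).differentiableAt.hasDerivAt

theorem besselJ_ode (p : ℕ) (z : ℂ) :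
    z ^ 2 * deriv (besselJ' p) z + z * besselJ' p z + (z ^ 2 - p ^ 2) * besselJ p z = 0 := by
  rw [(hasDerivAt_besselJ'_series p z).deriv, besselJ'_eq_besselSeries', besselJ_eq_besselSeries]
  linear_combination besselSeries_ode p (z / 2)

lemma HasDerivAt.comp_ofReal_sqrt_mul {f : ℂ → ℂ} {f' : ℂ} {n : ℝ} (hn : n ≠ 0) (κ : ℂ)
    (hf : HasDerivAt f f' (√n * κ)) :
    HasDerivAt (fun t : ℝ => f (√t * κ)) (κ / (2 * √n) * f') n := by
  refine (hf.scomp n ((Real.hasDerivAt_sqrt hn).ofReal_comp.mul_const κ)).congr_deriv ?_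
  rw [smul_eq_mul]
  push_cast
  ring

lemma hasDerivAt_Fp (p : ℕ) {n : ℝ} (hn : n ≠ 0) (κ : ℂ) :
    HasDerivAt (Fp p κ) (κ * (besselJ' p κ * (κ / (2 * √n) * besselJ' p (√n * κ))
      - (1 / (2 * √n) * besselJ p κ * besselJ' p (√n * κ)
        + √n * besselJ p κ * (κ / (2 * √n) * deriv (besselJ' p) (√n * κ))))) n := by
  have hsqrt : HasDerivAt (fun t : ℝ => (√t : ℂ)) (1 / (2 * √n)) n :=
    (Real.hasDerivAt_sqrt hn).ofReal_comp.congr_deriv (by push_cast; rfl)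
  exact ((((hasDerivAt_besselJ p _).comp_ofReal_sqrt_mul hn κ).const_mul _).sub
    ((hsqrt.mul_const _).mul ((hasDerivAt_besselJ' p _).comp_ofReal_sqrt_mul hn κ))).const_mul κ

theorem stmt_4_general (p : ℕ) (n : ℝ) (hn : 0 < n) (κ : ℂ) :
    deriv (fun t : ℝ => Fp p κ t) n
      = (((n : ℂ) * κ ^ 2 - (p : ℂ) ^ 2) / (2 * (n : ℂ)))
          * besselJ p κ * besselJ p ((Real.sqrt n : ℂ) * κ)
        + (κ ^ 2 / (2 * (Real.sqrt n : ℂ)))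
          * besselJ' p κ * besselJ' p ((Real.sqrt n : ℂ) * κ) := by
  have hsqrt : ((√n : ℝ) : ℂ) ^ 2 = n := by exact_mod_cast Real.sq_sqrt hn.le
  have hsqrt0 : ((√n : ℝ) : ℂ) ≠ 0 := by exact_mod_cast (Real.sqrt_pos.2 hn).ne'
  rw [(hasDerivAt_Fp p hn.ne' κ).deriv, ← hsqrt]
  field_simp
  linear_combination -besselJ p κ * besselJ_ode p (κ * √n)

/-- the n-partial derivative of `F_p` at a root of `F_p`. -/
theorem stmt_4 (p : ℕ) (n : ℝ) (hn : 0 < n) (κ : ℂ) (hF : Fp p κ n = 0) :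
    deriv (fun t : ℝ => Fp p κ t) n
      = (((n : ℂ) * κ ^ 2 - (p : ℂ) ^ 2) / (2 * (n : ℂ)))
          * besselJ p κ * besselJ p ((Real.sqrt n : ℂ) * κ)
        + (κ ^ 2 / (2 * (Real.sqrt n : ℂ)))
          * besselJ' p κ * besselJ' p ((Real.sqrt n : ℂ) * κ) :=
  stmt_4_general p n hn κ
end

section
/- Let p ≥ 0 be an integer, let κ* > 0 satisfy J_p(κ*) = 0, J_p'(κ*) ≠ 0, κ* > p and (κ*)² > p² + 1/8, and let n* > 1. Then there exist ε ∈ (0, n* − 1) and δ > 0 such that for every real n ∈ (n* − ε, n*) and every κ ∈ ℂ with |κ − κ*| < δ, Re(κ) − κ* > Im(κ) > 0 and J_p(κ) ≠ 0, one has Im( −(n·κ² − p²)/(2n·(n − 1)·κ) − κ·J_p'(κ)²/(2n·(n − 1)·J_p(κ)²) ) > 0. -/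
/-!
Near the simple real zero `κs` of the entire function `J = besselJ p`, which satisfies
`J (conj z) = conj (J z)`, one has `κ J'(κ)² / J(κ)² = κs / w² + b / w + ψ κ` with
`w = κ - κs`, `b` real and `ψ` analytic and real-symmetric, so that `Im ψ κ = O(Im w)`.
After clearing the positive factor `2n(n - 1)`, the double pole contributes at least
`κs · Im w / (2 (Re w)³)` to the imaginary part in the sector `0 < Im w < Re w`, while every
other term is `O(Im w / (Re w)²)` uniformly for `n` below `nst`; so the double pole wins once
`|w|` is small.
-/

open Complex Real Filter Set

open scoped ComplexConjugate

lemma norm_besselJ_term_le (p m : ℕ) {R : ℝ} {w : ℂ} (hw : ‖w‖ ≤ R) :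
    ‖(-1 : ℂ) ^ m / ((Nat.factorial m : ℂ) * (Nat.factorial (m + p) : ℂ))
        * (w / 2) ^ (2 * m + p)‖
      ≤ (R / 2) ^ p * ((R / 2) ^ 2) ^ m / (Nat.factorial m : ℝ) := by
  have hmp : (1 : ℝ) ≤ Nat.factorial (m + p) := by
    exact_mod_cast Nat.one_le_iff_ne_zero.mpr (Nat.factorial_ne_zero _)
  have hw2 : ‖w / 2‖ ≤ R / 2 := by rw [norm_div, Complex.norm_ofNat]; linarith
  have hR : 0 ≤ R / 2 := (norm_nonneg _).trans hw2
  calc _ = ‖w / 2‖ ^ (2 * m + p) / ((Nat.factorial m : ℝ) * Nat.factorial (m + p)) := by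
        simp only [norm_mul, norm_div, norm_pow, norm_neg, norm_one, one_pow, Complex.norm_natCast]
        ring
    _ ≤ (R / 2) ^ (2 * m + p) / ((Nat.factorial m : ℝ) * 1) := by
        gcongr
    _ = _ := by rw [mul_one, pow_add, pow_mul]; ring

lemma differentiable_besselJ (p : ℕ) : Differentiable ℂ (besselJ p) := by
  intro z
  set R := ‖z‖ + 1
  have hball : DifferentiableOn ℂ (besselJ p) (Metric.ball 0 R) :=
    differentiableOn_tsum_of_summable_norm
      (u := fun m => (R / 2) ^ p * ((R / 2) ^ 2) ^ m / (Nat.factorial m : ℝ))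
      ((Real.summable_pow_div_factorial ((R / 2) ^ 2)).mul_left ((R / 2) ^ p) |>.congr
        fun m => (mul_div_assoc _ _ _).symm)
      (fun m => ((differentiable_const _).mul
        ((differentiable_id.div_const 2).pow _)).differentiableOn)
      Metric.isOpen_ball
      (fun m w hw => norm_besselJ_term_le p m (by simpa using (Metric.mem_ball.mp hw).le))
  exact hball.differentiableAt (Metric.isOpen_ball.mem_nhds (by simp [R]))

def IsRealSymmetric (f : ℂ → ℂ) : Prop := ∀ z, f (conj z) = conj (f z)

lemma isRealSymmetric_besselJ (p : ℕ) : IsRealSymmetric (besselJ p) := by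
  intro z
  simp only [besselJ, starRingEnd_apply]
  rw [tsum_star]
  congr 1
  funext m
  simp only [← starRingEnd_apply, map_mul, map_pow, map_div₀, map_neg, map_one, map_natCast,
    map_ofNat]

namespace IsRealSymmetric

variable {f : ℂ → ℂ}

lemma conj_apply_ofReal (hf : IsRealSymmetric f) (x : ℝ) : conj (f x) = f x := by
  rw [← hf, conj_ofReal]

lemma deriv (hf : IsRealSymmetric f) : IsRealSymmetric (deriv f) := by
  intro z
  have hconj : conj ∘ f ∘ conj = f := funext fun z => by simp [hf z]
  have := congrFun (deriv_conj_conj (f := f)) (conj z)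
  rwa [hconj, Function.comp_apply, Function.comp_apply, conj_conj] at this

lemma dslope (hf : IsRealSymmetric f) (a : ℝ) : IsRealSymmetric (dslope f a) := by
  intro z
  by_cases hz : z = a
  · rw [hz, conj_ofReal, dslope_same, hf.deriv.conj_apply_ofReal]
  · have hz' : conj z ≠ a := fun h => hz (by rw [← conj_conj z, h, conj_ofReal])
    rw [dslope_of_ne _ hz, dslope_of_ne _ hz', slope_def_field, slope_def_field, map_div₀,
      map_sub, map_sub, hf, hf.conj_apply_ofReal, conj_ofReal]

lemma abs_im_le_of_lipschitzOnWith (hf : IsRealSymmetric f) {K : NNReal} {s : Set ℂ}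
    (hK : LipschitzOnWith K f s) {z : ℂ} (hz : z ∈ s) (hz' : conj z ∈ s) :
    |(f z).im| ≤ K * |z.im| := by
  have h := hK.dist_le_mul z hz _ hz'
  have hdist : ∀ w : ℂ, dist w (conj w) = 2 * |w.im| := fun w => by
    rw [Complex.dist_eq, sub_conj, norm_mul, norm_I, norm_real, Real.norm_eq_abs, mul_one, abs_mul,
      abs_two]
  rw [hf, hdist, hdist] at h
  linarith

lemma exists_abs_im_le (hf : IsRealSymmetric f) {a : ℝ} (ha : AnalyticAt ℂ f a) :
    ∃ K : NNReal, ∃ ρ > 0, ∀ z : ℂ, ‖z - a‖ < ρ → |(f z).im| ≤ K * |z.im| := by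
  obtain ⟨K, t, ht, hK⟩ := (ha.contDiffAt (n := 1)).exists_lipschitzOnWith
  obtain ⟨ρ, hρ, hball⟩ := Metric.mem_nhds_iff.mp ht
  refine ⟨K, ρ, hρ, fun z hz => hf.abs_im_le_of_lipschitzOnWith hK (hball ?_) (hball ?_)⟩
  · rwa [Metric.mem_ball, Complex.dist_eq]
  · rwa [Metric.mem_ball, Complex.dist_eq, ← conj_ofReal, ← map_sub, norm_conj]

end IsRealSymmetric

lemma AnalyticAt.dslope {f : ℂ → ℂ} {a : ℂ} (hf : AnalyticAt ℂ f a) :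
    AnalyticAt ℂ (dslope f a) a := by
  obtain ⟨q, hq⟩ := hf
  exact ⟨q.fslope, hq.has_fpower_series_dslope_fslope⟩

lemma eq_add_deriv_mul_add_dslope_dslope_mul_sq {𝕜 : Type*} [NontriviallyNormedField 𝕜]
    (f : 𝕜 → 𝕜) (a z : 𝕜) :
    f z = f a + deriv f a * (z - a) + dslope (dslope f a) a z * (z - a) ^ 2 := by
  have h₁ := sub_smul_dslope f a z
  have h₂ := sub_smul_dslope (dslope f a) a z
  rw [smul_eq_mul] at h₁ h₂
  rw [dslope_same] at h₂
  linear_combination -h₁ - (z - a) * h₂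

theorem exists_mul_deriv_sq_div_sq_eq_of_simple_zero {f : ℂ → ℂ} (hf : IsRealSymmetric f)
    {a : ℝ} (hfa : AnalyticAt ℂ f a) (h₀ : f a = 0) (h₁ : deriv f a ≠ 0) :
    ∃ b : ℝ, ∃ ψ : ℂ → ℂ, AnalyticAt ℂ ψ a ∧ IsRealSymmetric ψ ∧
      ∀ z, f z ≠ 0 →
        z * deriv f z ^ 2 / f z ^ 2 = (a : ℂ) / (z - a) ^ 2 + (b : ℂ) / (z - a) + ψ z := by
  set g := dslope f a
  have hfg : ∀ z, f z = (z - a) * g z := fun z => by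
    simpa [h₀] using (sub_smul_dslope f a z).symm
  have hga : g a = deriv f a := dslope_same f a
  set φ : ℂ → ℂ := fun z => z * deriv f z ^ 2 / g z ^ 2
  have hφa : φ a = a := by
    simp only [φ, hga]
    field_simp
  have hφ : AnalyticAt ℂ φ a :=
    (analyticAt_id.mul (hfa.deriv.pow 2)).div (hfa.dslope.pow 2)
      (by rw [hga]; exact pow_ne_zero 2 h₁)
  have hgs : IsRealSymmetric g := hf.dslope a
  have hφs : IsRealSymmetric φ := fun z => by
    simp only [φ, map_div₀, map_mul, map_pow, hf.deriv z, hgs z]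
  have hb : ((deriv φ a).re : ℂ) = deriv φ a :=
    conj_eq_iff_re.mp (hφs.deriv.conj_apply_ofReal a)
  refine ⟨(deriv φ a).re, dslope (dslope φ a) a, hφ.dslope.dslope, (hφs.dslope a).dslope a,
    fun z hz => ?_⟩
  have hza : z - a ≠ 0 := fun h => hz (by rw [hfg, h, zero_mul])
  have hgz : g z ≠ 0 := fun h => hz (by rw [hfg, h, mul_zero])
  have hφz := eq_add_deriv_mul_add_dslope_dslope_mul_sq φ a z
  rw [hφa, ← hb] at hφz
  calc z * deriv f z ^ 2 / f z ^ 2 = φ z / (z - a) ^ 2 := by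
        simp only [φ, hfg]
        field_simp
    _ = _ := by
        rw [hφz]
        field_simp

lemma abs_im_inv_le {w : ℂ} (hw : 0 < w.re) : |(w⁻¹).im| ≤ |w.im| / w.re ^ 2 := by
  have hw₀ : w ≠ 0 := fun h => by simp [h] at hw
  rw [inv_im, neg_div, abs_neg, abs_div, abs_of_pos (normSq_pos.mpr hw₀), normSq_apply]
  gcongr
  nlinarith [mul_self_nonneg w.im]

lemma im_inv_sq_le {w : ℂ} (hy : 0 < w.im) (hyx : w.im < w.re) :
    ((w ^ 2)⁻¹).im ≤ -(w.im / (2 * w.re ^ 3)) := by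
  have hx : 0 < w.re := hy.trans hyx
  have hn : normSq (w ^ 2) = (w.re ^ 2 + w.im ^ 2) ^ 2 := by
    rw [map_pow, normSq_apply]; ring
  have hn' : (w.re ^ 2 + w.im ^ 2) ^ 2 ≤ 4 * w.re ^ 4 := by
    have : w.re ^ 2 + w.im ^ 2 ≤ 2 * w.re ^ 2 := by nlinarith
    nlinarith [pow_le_pow_left₀ (by positivity) this 2]
  rw [inv_im, hn, sq w, mul_im, neg_div, neg_le_neg_iff,
    div_le_div_iff₀ (by positivity) (by positivity)]
  nlinarith [mul_le_mul_of_nonneg_left hn' (by positivity : 0 ≤ w.im * w.re)]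

lemma im_pos_of_double_pole_dominates {a b K N P n : ℝ} {w c : ℂ} (ha : 0 < a) (hP : 0 ≤ P)
    (hN : 0 ≤ N) (hn : n ≤ N) (hy : 0 < w.im) (hyx : w.im < w.re) (hx₁ : w.re ≤ 1)
    (hxa : 2 * (|b| + K + N + P / a ^ 2) * w.re < a) (hc : |c.im| ≤ K * w.im) :
    0 < (-(n * (a + w)) + P / (a + w) - (a / w ^ 2 + b / w + c)).im := by
  have hx : 0 < w.re := hy.trans hyx
  have hK : 0 ≤ K := le_of_mul_le_mul_right (by simpa using (abs_nonneg _).trans hc) hy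
  have hpole : -(P * (w.im / a ^ 2)) ≤ (P / (a + w)).im := by
    have hre : 0 < (a + w : ℂ).re := by simp only [add_re, ofReal_re]; linarith
    have h := abs_im_inv_le hre
    simp only [add_re, add_im, ofReal_re, ofReal_im, zero_add, abs_of_pos hy] at h
    have h' : |((a + w : ℂ)⁻¹).im| ≤ w.im / a ^ 2 := h.trans (by gcongr; linarith)
    rw [div_eq_mul_inv (P : ℂ), im_ofReal_mul]
    nlinarith [neg_abs_le ((a + w : ℂ)⁻¹).im]
  have hdouble : (a / w ^ 2).im ≤ -(a * (w.im / (2 * w.re ^ 3))) := by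
    rw [div_eq_mul_inv, im_ofReal_mul, ← mul_neg]
    exact mul_le_mul_of_nonneg_left (im_inv_sq_le hy hyx) ha.le
  have hsimple : (b / w).im ≤ |b| * (w.im / w.re ^ 2) := by
    rw [div_eq_mul_inv, im_ofReal_mul]
    calc b * (w⁻¹).im ≤ |b| * |(w⁻¹).im| := by rw [← abs_mul]; exact le_abs_self _
      _ ≤ |b| * (w.im / w.re ^ 2) := by
        gcongr
        simpa only [abs_of_pos hy] using abs_im_inv_le hx
  have hreg : c.im ≤ K * w.im := (le_abs_self _).trans hc
  have hsplit : (-(n * (a + w)) + P / (a + w) - (a / w ^ 2 + b / w + c)).im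
      = -(n * w.im) + (P / (a + w)).im - (a / w ^ 2).im - (b / w).im - c.im := by
    simp only [sub_im, add_im, neg_im, im_ofReal_mul, ofReal_im, zero_add]
    ring
  set u := w.im / w.re ^ 2 with hu
  have hyu : w.im ≤ u := by
    have : w.re ^ 2 ≤ 1 := by nlinarith
    exact (le_div_iff₀ (by positivity)).mpr (by nlinarith [mul_le_mul_of_nonneg_left this hy.le])
  have hdominant : (|b| + K + N + P / a ^ 2) * u < a * (w.im / (2 * w.re ^ 3)) := by
    have : a * (w.im / (2 * w.re ^ 3)) = a / (2 * w.re) * u := by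
      rw [hu]; field_simp
    rw [this]
    exact mul_lt_mul_of_pos_right ((lt_div_iff₀ (by positivity)).mpr (by linarith))
      (by positivity)
  have hrest : K * w.im + N * w.im + P * (w.im / a ^ 2) ≤ (K + N + P / a ^ 2) * u := by
    have := mul_le_mul_of_nonneg_left hyu (by positivity : 0 ≤ K + N + P / a ^ 2)
    linarith [show P * (w.im / a ^ 2) = P / a ^ 2 * w.im by ring]
  have hny : n * w.im ≤ N * w.im := mul_le_mul_of_nonneg_right hn hy.le
  rw [hsplit]
  linarith

lemma neg_div_sub_div_eq_div_two_mul_mul_sub_one {n : ℝ} (hn₀ : n ≠ 0) (hn₁ : n ≠ 1)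
    {κ q u v : ℂ} (hκ : κ ≠ 0) (hu : u ≠ 0) :
    -((n * κ ^ 2 - q) / (2 * n * (n - 1) * κ)) - κ * v ^ 2 / (2 * n * (n - 1) * u ^ 2)
      = (-(n * κ) + q / κ - κ * v ^ 2 / u ^ 2) / ((2 * n * (n - 1) : ℝ) : ℂ) := by
  have : (n : ℂ) - 1 ≠ 0 := sub_ne_zero.mpr (by exact_mod_cast hn₁)
  have : (n : ℂ) ≠ 0 := by exact_mod_cast hn₀
  push_cast
  field_simp
  ring

theorem stmt_11_general (p : ℕ) (κs : ℝ) (hκs : 0 < κs)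
    (hJ : besselJ p (κs : ℂ) = 0) (hJ' : besselJ' p (κs : ℂ) ≠ 0)
    (nst : ℝ) (hnst : 1 < nst) :
    ∃ ε, 0 < ε ∧ ε < nst - 1 ∧ ∃ δ > 0, ∀ n : ℝ, n ∈ Set.Ioo (nst - ε) nst →
      ∀ κ : ℂ, ‖κ - (κs : ℂ)‖ < δ →
        κ.im < κ.re - κs → 0 < κ.im →
        besselJ p κ ≠ 0 →
        0 < (-(((n : ℂ) * κ ^ 2 - (p : ℂ) ^ 2) / (2 * (n : ℂ) * ((n : ℂ) - 1) * κ))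
              - κ * (besselJ' p κ) ^ 2
                / (2 * (n : ℂ) * ((n : ℂ) - 1) * (besselJ p κ) ^ 2)).im := by
  obtain ⟨b, ψ, hψ, hψs, hexpand⟩ := exists_mul_deriv_sq_div_sq_eq_of_simple_zero
    (isRealSymmetric_besselJ p) ((differentiable_besselJ p).analyticAt _) hJ hJ'
  obtain ⟨K, ρ, hρ, hψim⟩ := hψs.exists_abs_im_le hψ
  set M := |b| + K + nst + (p : ℝ) ^ 2 / κs ^ 2
  have hM : 0 < M := by positivity
  refine ⟨(nst - 1) / 2, by linarith, by linarith, min ρ (min 1 (κs / (2 * M))),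
    lt_min hρ (lt_min one_pos (by positivity)), ?_⟩
  rintro n ⟨hn₁, hn₂⟩ κ hκ hyx hy hJκ
  obtain ⟨w, rfl⟩ : ∃ w : ℂ, κ = κs + w := ⟨κ - κs, by ring⟩
  simp only [add_sub_cancel_left, add_re, add_im, ofReal_re, ofReal_im, zero_add, lt_min_iff]
    at hκ hyx hy
  obtain ⟨hwρ, hw₁, hwM⟩ := hκ
  have hκ₀ : (κs + w : ℂ) ≠ 0 :=
    ne_of_apply_ne re (by simp only [add_re, ofReal_re, zero_re]; linarith)
  rw [neg_div_sub_div_eq_div_two_mul_mul_sub_one (by linarith) (by linarith) hκ₀ hJκ,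
    div_ofReal_im, besselJ', hexpand _ hJκ, add_sub_cancel_left, ← ofReal_natCast,
    ← ofReal_pow]
  refine div_pos (im_pos_of_double_pole_dominates (K := K) hκs (sq_nonneg _) (by linarith) hn₂.le
    hy hyx ((re_le_norm w).trans hw₁.le) ?_ ?_) (by nlinarith)
  · have := (lt_div_iff₀ (by positivity)).mp ((re_le_norm w).trans_lt hwM)
    linarith
  · simpa [abs_of_pos hy] using hψim (κs + w) (by simpa using hwρ)

/-- positivity of the imaginary part of `d_n(κ)` near `κ*` for `n* > 1`. -/
theorem stmt_11 (p : ℕ) (κs : ℝ) (hκs : 0 < κs)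
    (hJ : besselJ p (κs : ℂ) = 0) (hJ' : besselJ' p (κs : ℂ) ≠ 0)
    (hpκ : (p : ℝ) < κs) (hpκ2 : (p : ℝ) ^ 2 + 1 / 8 < κs ^ 2)
    (nst : ℝ) (hnst : 1 < nst) :
    ∃ ε, 0 < ε ∧ ε < nst - 1 ∧ ∃ δ > 0, ∀ n : ℝ, n ∈ Set.Ioo (nst - ε) nst →
      ∀ κ : ℂ, ‖κ - (κs : ℂ)‖ < δ →
        κ.im < κ.re - κs → 0 < κ.im →
        besselJ p κ ≠ 0 →
        0 < (-(((n : ℂ) * κ ^ 2 - (p : ℂ) ^ 2) / (2 * (n : ℂ) * ((n : ℂ) - 1) * κ))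
              - κ * (besselJ' p κ) ^ 2
                / (2 * (n : ℂ) * ((n : ℂ) - 1) * (besselJ p κ) ^ 2)).im :=
  stmt_11_general p κs hκs hJ hJ' nst hnst
end
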